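/- Jost-function Wronskian identity: let z ∈ ℂ with |z| = 1 and z² ≠ 1, let 0 < γ < 1/2 and μ ∈ ℂ with Re μ = 0, and let F, F₁ ∈ ℂ. Suppose real sequences P_n, Q_n satisfy P_n = (zF/(1−z²))z^{-n}e^{μ n^{1-2γ}/(1-2γ)} + (z·conj(F)/(z²−1))z^{n}e^{−μ n^{1-2γ}/(1-2γ)} + o(1) and Q_n = (zF₁/(1−z²))z^{-n}e^{μ n^{1-2γ}/(1-2γ)} + (z·conj(F₁)/(z²−1))z^{n}e^{−μ n^{1-2γ}/(1-2γ)} + o(1) as n → ∞, and that P_n·Q_{n+1} − P_{n+1}·Q_n = 1 for all n. Then F·conj(F₁) − conj(F)·F₁ = 1/z − z. -/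

import Mathlib

open Filter Topology

/-!
The free solutions `S n = a z⁻ⁿ e^{μ φ n} + b zⁿ e^{-μ φ n}` have discrete Wronskian
`(a b₁ - b a₁) (z ρₙ⁻¹ - z⁻¹ ρₙ)` with `ρₙ = e^{μ (φ (n+1) - φ n)}`, and `ρₙ → 1` because the
phase `φ n = n^α / α`, `α = 1 - 2γ < 1`, has vanishing increments. As `|z| = 1` and `Re μ = 0`,
the free solutions are bounded, so the Wronskian of `P, Q` differs from theirs by `o(1)`. Hence
`(a b₁ - b a₁) (z - z⁻¹) = 1`, which is the identity once the coefficients are substituted.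
-/

lemma tendsto_rpow_add_one_sub_rpow {α : ℝ} (hα : α < 1) :
    Tendsto (fun x : ℝ => (x + 1) ^ α - x ^ α) atTop (𝓝 0) := by
  have hdecay : Tendsto (fun x : ℝ => |α| * x ^ (α - 1)) atTop (𝓝 0) := by
    simpa [neg_sub] using (tendsto_rpow_neg_atTop (y := 1 - α) (by linarith)).const_mul |α|
  have hderiv : ∀ c : ℝ, 0 < c → HasDerivAt (fun x => x ^ α) (α * c ^ (α - 1)) c :=
    fun c hc => Real.hasDerivAt_rpow_const (Or.inl hc.ne')
  refine squeeze_zero_norm' ?_ hdecay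
  filter_upwards [eventually_gt_atTop 0] with x hx
  obtain ⟨c, ⟨hxc, -⟩, hc⟩ := exists_hasDerivAt_eq_slope (fun x => x ^ α)
    (fun c => α * c ^ (α - 1)) (lt_add_one x)
    (fun c hc => (hderiv c (hx.trans_le hc.1)).continuousAt.continuousWithinAt)
    (fun c hc => hderiv c (hx.trans hc.1))
  rw [add_sub_cancel_left, div_one] at hc
  rw [← hc, norm_mul, Real.norm_eq_abs, Real.norm_eq_abs,
    abs_of_pos (Real.rpow_pos_of_pos (hx.trans hxc) _)]
  exact mul_le_mul_of_nonneg_left (Real.rpow_le_rpow_of_nonpos hx hxc.le (by linarith))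
    (abs_nonneg α)

lemma tendsto_mul_sub_mul {ι R : Type*} [NonUnitalSeminormedRing R] {l : Filter ι}
    {f f' g g' : ι → R} (hf : Tendsto (fun i => f i - f' i) l (𝓝 0))
    (hg : Tendsto (fun i => g i - g' i) l (𝓝 0)) (hf' : IsBoundedUnder (· ≤ ·) l (norm ∘ f'))
    (hg' : IsBoundedUnder (· ≤ ·) l (norm ∘ g')) :
    Tendsto (fun i => f i * g i - f' i * g' i) l (𝓝 0) := by
  have h := ((hf.mul hg).add (hf.zero_mul_isBoundedUnder_le hg')).add
    (isBoundedUnder_le_mul_tendsto_zero hf' hg)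
  simp only [mul_zero, add_zero] at h
  refine h.congr fun i => ?_
  noncomm_ring

def discreteWronskian {R : Type*} [Ring R] (f g : ℕ → R) (n : ℕ) : R :=
  f n * g (n + 1) - f (n + 1) * g n

lemma tendsto_discreteWronskian_sub {R : Type*} [NormedRing R] {f f' g g' : ℕ → R}
    (hf : Tendsto (fun n => f n - f' n) atTop (𝓝 0))
    (hg : Tendsto (fun n => g n - g' n) atTop (𝓝 0))
    (hf' : IsBoundedUnder (· ≤ ·) atTop (norm ∘ f'))
    (hg' : IsBoundedUnder (· ≤ ·) atTop (norm ∘ g')) :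
    Tendsto (fun n => discreteWronskian f g n - discreteWronskian f' g' n) atTop (𝓝 0) := by
  have hshift := tendsto_add_atTop_nat 1
  have h := (tendsto_mul_sub_mul hf (hg.comp hshift) hf' (hshift.isBoundedUnder_comp hg')).sub
    (tendsto_mul_sub_mul (hf.comp hshift) hg (hshift.isBoundedUnder_comp hf') hg')
  rw [sub_zero] at h
  refine h.congr fun n => ?_
  simp only [discreteWronskian]
  abel

noncomputable def jostSolution (z a b μ : ℂ) (φ : ℕ → ℝ) (n : ℕ) : ℂ :=
  a * z ^ (-(n : ℤ)) * Complex.exp (μ * φ n) + b * z ^ n * Complex.exp (-μ * φ n)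

section jostSolution

variable {z μ : ℂ} {φ : ℕ → ℝ}

lemma norm_jostSolution_le (hz : ‖z‖ = 1) (hμ : μ.re = 0) (a b : ℂ) (n : ℕ) :
    ‖jostSolution z a b μ φ n‖ ≤ ‖a‖ + ‖b‖ := by
  refine (norm_add_le _ _).trans_eq ?_
  simp [Complex.norm_exp, hμ, hz]

lemma discreteWronskian_jostSolution (hz : z ≠ 0) (a b a₁ b₁ : ℂ) (n : ℕ) :
    discreteWronskian (jostSolution z a b μ φ) (jostSolution z a₁ b₁ μ φ) n =
      (a * b₁ - b * a₁) * (z * (Complex.exp (μ * (φ (n + 1) - φ n : ℝ)))⁻¹ -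
        z⁻¹ * Complex.exp (μ * (φ (n + 1) - φ n : ℝ))) := by
  have hu := Complex.exp_ne_zero (μ * φ n)
  have hv := Complex.exp_ne_zero (μ * φ (n + 1))
  have hzn := pow_ne_zero n hz
  simp only [discreteWronskian, jostSolution, Complex.ofReal_sub, mul_sub, Complex.exp_sub,
    neg_mul, Complex.exp_neg, zpow_neg, zpow_natCast, pow_succ]
  field_simp
  ring

lemma tendsto_discreteWronskian_jostSolution (hz : z ≠ 0)
    (hφ : Tendsto (fun n => φ (n + 1) - φ n) atTop (𝓝 0)) (a b a₁ b₁ : ℂ) :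
    Tendsto (discreteWronskian (jostSolution z a b μ φ) (jostSolution z a₁ b₁ μ φ)) atTop
      (𝓝 ((a * b₁ - b * a₁) * (z - z⁻¹))) := by
  have hρ : Tendsto (fun n => Complex.exp (μ * (φ (n + 1) - φ n : ℝ))) atTop (𝓝 1) := by
    simpa using (((Complex.continuous_ofReal.tendsto 0).comp hφ).const_mul μ).cexp
  simp_rw [funext (discreteWronskian_jostSolution hz a b a₁ b₁)]
  simpa using (((hρ.inv₀ one_ne_zero).const_mul z).sub (hρ.const_mul z⁻¹)).const_mul
    (a * b₁ - b * a₁)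

end jostSolution

lemma jost_coefficients_mul {K : Type*} [Field K] {z : K} (hz : z ≠ 0) (F G F₁ G₁ : K) :
    (z * F / (1 - z ^ 2) * (z * G₁ / (z ^ 2 - 1)) - z * G / (z ^ 2 - 1) * (z * F₁ / (1 - z ^ 2)))
      * (z - z⁻¹) = z * (F * G₁ - G * F₁) / (1 - z ^ 2) := by
  rcases eq_or_ne (1 - z ^ 2) 0 with hD | hD
  · have hD' : z ^ 2 - 1 = 0 := by linear_combination -hD
    simp [hD, hD']
  · have hD' : z ^ 2 - 1 ≠ 0 := fun h => hD (by linear_combination -h)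
    field_simp

theorem jost_wronskian_identity_general (z : ℂ) (hz : ‖z‖ = 1)
    (γ : ℝ) (hγ0 : 0 < γ) (μ : ℂ) (hμ : μ.re = 0)
    (F F₁ : ℂ) (P Q : ℕ → ℝ)
    (hP : Tendsto (fun n : ℕ =>
        (P n : ℂ) -
          (z * F / (1 - z ^ 2) * z ^ (-(n : ℤ)) *
              Complex.exp (μ * ((n : ℝ) ^ (1 - 2 * γ) / (1 - 2 * γ) : ℝ)) +
            z * starRingEnd ℂ F / (z ^ 2 - 1) * z ^ (n : ℕ) *
              Complex.exp (-μ * ((n : ℝ) ^ (1 - 2 * γ) / (1 - 2 * γ) : ℝ))))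
      atTop (nhds 0))
    (hQ : Tendsto (fun n : ℕ =>
        (Q n : ℂ) -
          (z * F₁ / (1 - z ^ 2) * z ^ (-(n : ℤ)) *
              Complex.exp (μ * ((n : ℝ) ^ (1 - 2 * γ) / (1 - 2 * γ) : ℝ)) +
            z * starRingEnd ℂ F₁ / (z ^ 2 - 1) * z ^ (n : ℕ) *
              Complex.exp (-μ * ((n : ℝ) ^ (1 - 2 * γ) / (1 - 2 * γ) : ℝ))))
      atTop (nhds 0))
    (hW : ∀ n : ℕ, 1 ≤ n → (P n : ℂ) * Q (n + 1) - (P (n + 1) : ℂ) * Q n = 1) :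
    F * starRingEnd ℂ F₁ - starRingEnd ℂ F * F₁ = 1 / z - z := by
  have hz0 : z ≠ 0 := by rintro rfl; simp at hz
  set φ : ℕ → ℝ := fun n => (n : ℝ) ^ (1 - 2 * γ) / (1 - 2 * γ)
  have hφ : Tendsto (fun n => φ (n + 1) - φ n) atTop (𝓝 0) := by
    simpa [φ, sub_div] using ((tendsto_rpow_add_one_sub_rpow (α := 1 - 2 * γ) (by linarith)).comp
      tendsto_natCast_atTop_atTop).div_const (1 - 2 * γ)
  have hbounded (a b : ℂ) : IsBoundedUnder (· ≤ ·) atTop (norm ∘ jostSolution z a b μ φ) :=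
    isBoundedUnder_of ⟨_, norm_jostSolution_le hz hμ a b⟩
  have hWPQ : Tendsto (discreteWronskian (fun n => (P n : ℂ)) (fun n => (Q n : ℂ))) atTop (𝓝 1) :=
    tendsto_const_nhds.congr' (eventually_atTop.2 ⟨1, fun n hn => (hW n hn).symm⟩)
  have hPS := tendsto_discreteWronskian_sub
    (f' := jostSolution z (z * F / (1 - z ^ 2)) (z * starRingEnd ℂ F / (z ^ 2 - 1)) μ φ)
    (g' := jostSolution z (z * F₁ / (1 - z ^ 2)) (z * starRingEnd ℂ F₁ / (z ^ 2 - 1)) μ φ)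
    hP hQ (hbounded _ _) (hbounded _ _)
  have hkey := tendsto_nhds_unique (tendsto_discreteWronskian_jostSolution hz0 hφ _ _ _ _)
    (by simpa only [sub_sub_cancel, sub_zero] using hWPQ.sub hPS)
  rw [jost_coefficients_mul hz0] at hkey
  have hD : 1 - z ^ 2 ≠ 0 := by rintro hD; simp [hD] at hkey
  field_simp at hkey ⊢
  linear_combination hkey

theorem jost_wronskian_identity (z : ℂ) (hz : ‖z‖ = 1) (hz2 : z ^ 2 ≠ 1)
    (γ : ℝ) (hγ0 : 0 < γ) (hγ : γ < 1 / 2) (μ : ℂ) (hμ : μ.re = 0)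
    (F F₁ : ℂ) (P Q : ℕ → ℝ)
    (hP : Tendsto (fun n : ℕ =>
        (P n : ℂ) -
          (z * F / (1 - z ^ 2) * z ^ (-(n : ℤ)) *
              Complex.exp (μ * ((n : ℝ) ^ (1 - 2 * γ) / (1 - 2 * γ) : ℝ)) +
            z * starRingEnd ℂ F / (z ^ 2 - 1) * z ^ (n : ℕ) *
              Complex.exp (-μ * ((n : ℝ) ^ (1 - 2 * γ) / (1 - 2 * γ) : ℝ))))
      atTop (nhds 0))
    (hQ : Tendsto (fun n : ℕ =>
        (Q n : ℂ) -
          (z * F₁ / (1 - z ^ 2) * z ^ (-(n : ℤ)) *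
              Complex.exp (μ * ((n : ℝ) ^ (1 - 2 * γ) / (1 - 2 * γ) : ℝ)) +
            z * starRingEnd ℂ F₁ / (z ^ 2 - 1) * z ^ (n : ℕ) *
              Complex.exp (-μ * ((n : ℝ) ^ (1 - 2 * γ) / (1 - 2 * γ) : ℝ))))
      atTop (nhds 0))
    (hW : ∀ n : ℕ, 1 ≤ n → (P n : ℂ) * Q (n + 1) - (P (n + 1) : ℂ) * Q n = 1) :
    F * starRingEnd ℂ F₁ - starRingEnd ℂ F * F₁ = 1 / z - z :=
  jost_wronskian_identity_general z hz γ hγ0 μ hμ F F₁ P Q hP hQ hW
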